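/- arXiv:1703.06054 — 5 statements merged into one kernel-verified Lean document; each statement's English description precedes it below -/
import Mathlib

section
/- Let ξ be a nonnegative real random variable whose law has density f, let t > 0 be such that 0 < F(t) < ∞, and let φ : [0,∞) → ℝ be a Borel function such that φ(ξ) is square-integrable and φ(ξ + t) is integrable. Then Var{φ(ξ)} ≥ (E{φ(ξ)} − E{φ(ξ + t)})² / F(t). -/
/-!
Let `ν` be the law of `ξ` and `h(v) = 1 - f(v - t)/f(v)`. Since `f(v - t)` vanishes wherever
`f(v)` does, `h f = f - f(· - t)`, so under `ν` the score `h` is centred, has variance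
`∫ f(v - t)²/f(v) dv - 1 = F(t)`, and its covariance with `φ` is `E φ(ξ) - E φ(ξ + t)`.
The inequality is then Cauchy–Schwarz for covariances.
-/

open MeasureTheory ProbabilityTheory
open scoped ENNReal

section CauchySchwarz

variable {Ω : Type*} [MeasurableSpace Ω] {μ : Measure Ω} {X Y : Ω → ℝ}

theorem sq_integral_mul_le_integral_sq_mul_integral_sq (hX : MemLp X 2 μ) (hY : MemLp Y 2 μ) :
    (∫ ω, X ω * Y ω ∂μ) ^ 2 ≤ (∫ ω, X ω ^ 2 ∂μ) * ∫ ω, Y ω ^ 2 ∂μ := by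
  have hXY : Integrable (fun ω => X ω * Y ω) μ := hX.integrable_mul hY
  have hquad : ∀ x : ℝ, 0 ≤ (∫ ω, Y ω ^ 2 ∂μ) * (x * x) + 2 * (∫ ω, X ω * Y ω ∂μ) * x
      + ∫ ω, X ω ^ 2 ∂μ := by
    intro x
    have hexpand : ∫ ω, (X ω + x * Y ω) ^ 2 ∂μ = ∫ ω, X ω ^ 2 ∂μ
        + 2 * x * ∫ ω, X ω * Y ω ∂μ + x * x * ∫ ω, Y ω ^ 2 ∂μ := calc
      _ = ∫ ω, (X ω ^ 2 + 2 * x * (X ω * Y ω) + x * x * Y ω ^ 2) ∂μ := by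
        congr with ω; ring
      _ = _ := by
        rw [integral_add, integral_add, integral_const_mul, integral_const_mul]
        exacts [hX.integrable_sq, hXY.const_mul _, hX.integrable_sq.add (hXY.const_mul _),
          hY.integrable_sq.const_mul _]
    have hnonneg : 0 ≤ ∫ ω, (X ω + x * Y ω) ^ 2 ∂μ := integral_nonneg fun ω => sq_nonneg _
    linarith
  have hdiscr := discrim_le_zero hquad
  rw [discrim] at hdiscr
  linarith

theorem covariance_sq_le_variance_mul_variance [IsFiniteMeasure μ] (hX : MemLp X 2 μ)
    (hY : MemLp Y 2 μ) : cov[X, Y; μ] ^ 2 ≤ Var[X; μ] * Var[Y; μ] := by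
  rw [covariance, variance_eq_integral hX.aemeasurable, variance_eq_integral hY.aemeasurable]
  exact sq_integral_mul_le_integral_sq_mul_integral_sq (hX.sub (memLp_const _))
    (hY.sub (memLp_const _))

end CauchySchwarz

section Density

variable {α : Type*} [MeasurableSpace α] {μ : Measure α} {f : α → ℝ}

theorem integral_withDensity_ofReal (hf : Measurable f) (hf0 : ∀ x, 0 ≤ f x) (g : α → ℝ) :
    ∫ x, g x ∂μ.withDensity (fun x => ENNReal.ofReal (f x)) = ∫ x, g x * f x ∂μ := by
  rw [integral_withDensity_eq_integral_toReal_smul hf.ennreal_ofReal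
    (.of_forall fun _ => ENNReal.ofReal_lt_top)]
  simp_rw [ENNReal.toReal_ofReal (hf0 _), smul_eq_mul, mul_comm]

theorem integrable_withDensity_ofReal_iff (hf : Measurable f) (hf0 : ∀ x, 0 ≤ f x)
    {g : α → ℝ} : Integrable g (μ.withDensity fun x => ENNReal.ofReal (f x)) ↔
      Integrable (fun x => g x * f x) μ := by
  rw [integrable_withDensity_iff hf.ennreal_ofReal (.of_forall fun _ => ENNReal.ofReal_lt_top)]
  simp_rw [ENNReal.toReal_ofReal (hf0 _)]

theorem integrable_of_isProbabilityMeasure_withDensity (hf : Measurable f) (hf0 : ∀ x, 0 ≤ f x)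
    [IsProbabilityMeasure (μ.withDensity fun x => ENNReal.ofReal (f x))] : Integrable f μ := by
  simpa using (integrable_withDensity_ofReal_iff hf hf0 (g := fun _ => 1)).1 (integrable_const 1)

theorem integral_eq_one_of_isProbabilityMeasure_withDensity (hf : Measurable f)
    (hf0 : ∀ x, 0 ≤ f x) [IsProbabilityMeasure (μ.withDensity fun x => ENNReal.ofReal (f x))] :
    ∫ x, f x ∂μ = 1 := by
  simpa using (integral_withDensity_ofReal (μ := μ) hf hf0 fun _ => 1).symm

theorem integrable_and_toReal_lintegral_sub_one {g : α → ℝ} (hg : AEStronglyMeasurable g μ)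
    (hg0 : 0 ≤ᵐ[μ] g) (h : ((∫⁻ x, ENNReal.ofReal (g x) ∂μ) - 1).toReal ≠ 0) :
    Integrable g μ ∧ ((∫⁻ x, ENNReal.ofReal (g x) ∂μ) - 1).toReal = ∫ x, g x ∂μ - 1 := by
  obtain ⟨hne0, hnetop⟩ := ENNReal.toReal_ne_zero.1 h
  have hfin : ∫⁻ x, ENNReal.ofReal (g x) ∂μ ≠ ∞ := fun htop => hnetop (by simp [htop])
  refine ⟨(lintegral_ofReal_ne_top_iff_integrable hg hg0).1 hfin, ?_⟩
  rw [ENNReal.toReal_sub_of_le (not_le.1 (mt tsub_eq_zero_of_le hne0)).le hfin,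
    integral_eq_lintegral_of_nonneg_ae hg0 hg, ENNReal.toReal_one]

end Density

section ShiftScore

variable {f : ℝ → ℝ} {t : ℝ}

noncomputable def shiftScore (f : ℝ → ℝ) (t v : ℝ) : ℝ := 1 - f (v - t) / f v

theorem measurable_shiftScore (hf : Measurable f) : Measurable (shiftScore f t) := by
  unfold shiftScore; fun_prop

theorem shiftScore_mul_self (hft : ∀ v, f v = 0 → f (v - t) = 0) (v : ℝ) :
    shiftScore f t v * f v = f v - f (v - t) := by
  rcases eq_or_ne (f v) 0 with hv | hv
  · simp [hv, hft v hv]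
  · unfold shiftScore; field_simp

theorem shiftScore_sq_mul_self (hft : ∀ v, f v = 0 → f (v - t) = 0) (v : ℝ) :
    shiftScore f t v ^ 2 * f v = f v - 2 * f (v - t) + f (v - t) ^ 2 / f v := by
  rcases eq_or_ne (f v) 0 with hv | hv
  · simp [hv, hft v hv]
  · unfold shiftScore; field_simp; ring

theorem setLIntegral_Ioi_sq_shift_div (hf_zero : ∀ v < 0, f v = 0) (ht : 0 < t) :
    ∫⁻ v in Set.Ioi 0, ENNReal.ofReal (f (v - t) ^ 2 / f v) =
      ∫⁻ v, ENNReal.ofReal (f (v - t) ^ 2 / f v) := by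
  refine setLIntegral_eq_of_support_subset fun v hv => ?_
  by_contra! hv0
  simp [hf_zero (v - t) (by simp at hv0; linarith)] at hv

theorem integral_shiftScore (hf : Measurable f) (hf0 : ∀ v, 0 ≤ f v)
    [IsProbabilityMeasure (volume.withDensity fun v => ENNReal.ofReal (f v))]
    (hft : ∀ v, f v = 0 → f (v - t) = 0) :
    ∫ v, shiftScore f t v ∂volume.withDensity (fun v => ENNReal.ofReal (f v)) = 0 := by
  have hfi := integrable_of_isProbabilityMeasure_withDensity (μ := volume) hf hf0
  rw [integral_withDensity_ofReal hf hf0]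
  simp_rw [shiftScore_mul_self hft]
  rw [integral_sub hfi (hfi.comp_sub_right t), integral_sub_right_eq_self, sub_self]

theorem memLp_shiftScore (hf : Measurable f) (hf0 : ∀ v, 0 ≤ f v)
    [IsProbabilityMeasure (volume.withDensity fun v => ENNReal.ofReal (f v))]
    (hft : ∀ v, f v = 0 → f (v - t) = 0) (hq : Integrable fun v => f (v - t) ^ 2 / f v) :
    MemLp (shiftScore f t) 2 (volume.withDensity fun v => ENNReal.ofReal (f v)) := by
  have hfi := integrable_of_isProbabilityMeasure_withDensity (μ := volume) hf hf0
  refine (memLp_two_iff_integrable_sq (measurable_shiftScore hf).aestronglyMeasurable).2 ?_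
  rw [integrable_withDensity_ofReal_iff hf hf0]
  simp_rw [shiftScore_sq_mul_self hft]
  exact (hfi.sub ((hfi.comp_sub_right t).const_mul 2)).add hq

theorem variance_shiftScore (hf : Measurable f) (hf0 : ∀ v, 0 ≤ f v)
    [IsProbabilityMeasure (volume.withDensity fun v => ENNReal.ofReal (f v))]
    (hft : ∀ v, f v = 0 → f (v - t) = 0) (hq : Integrable fun v => f (v - t) ^ 2 / f v) :
    Var[shiftScore f t; volume.withDensity fun v => ENNReal.ofReal (f v)] =
      (∫ v, f (v - t) ^ 2 / f v) - 1 := by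
  have hfi := integrable_of_isProbabilityMeasure_withDensity (μ := volume) hf hf0
  rw [variance_eq_sub (memLp_shiftScore hf hf0 hft hq), integral_shiftScore hf hf0 hft,
    integral_withDensity_ofReal hf hf0]
  simp_rw [Pi.pow_apply, shiftScore_sq_mul_self hft]
  rw [integral_add (f := fun v => f v - 2 * f (v - t))
      (hfi.sub ((hfi.comp_sub_right t).const_mul 2)) hq,
    integral_sub hfi ((hfi.comp_sub_right t).const_mul 2), integral_const_mul,
    integral_sub_right_eq_self, integral_eq_one_of_isProbabilityMeasure_withDensity hf hf0]
  ring

theorem covariance_shiftScore (hf : Measurable f) (hf0 : ∀ v, 0 ≤ f v)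
    [IsProbabilityMeasure (volume.withDensity fun v => ENNReal.ofReal (f v))]
    (hft : ∀ v, f v = 0 → f (v - t) = 0) (hq : Integrable fun v => f (v - t) ^ 2 / f v)
    {φ : ℝ → ℝ} (hφ : MemLp φ 2 (volume.withDensity fun v => ENNReal.ofReal (f v))) :
    cov[φ, shiftScore f t; volume.withDensity fun v => ENNReal.ofReal (f v)] =
      ∫ v, φ v ∂volume.withDensity (fun v => ENNReal.ofReal (f v)) -
        ∫ v, φ (v + t) ∂volume.withDensity (fun v => ENNReal.ofReal (f v)) := by
  have hh := memLp_shiftScore hf hf0 hft hq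
  have hφf : Integrable fun v => φ v * f v :=
    (integrable_withDensity_ofReal_iff hf hf0).1 (hφ.integrable one_le_two)
  have hφhf : Integrable fun v => φ v * shiftScore f t v * f v :=
    (integrable_withDensity_ofReal_iff hf hf0).1 (hφ.integrable_mul hh)
  have hφh_mul : ∀ v, φ v * shiftScore f t v * f v = φ v * f v - φ v * f (v - t) := fun v => by
    rw [mul_assoc, shiftScore_mul_self hft]; ring
  have hφft : Integrable fun v => φ v * f (v - t) :=
    (hφf.sub hφhf).congr (.of_forall fun v => by simp [hφh_mul])
  rw [covariance_eq_sub hφ hh, integral_shiftScore hf hf0 hft, mul_zero, sub_zero,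
    integral_withDensity_ofReal hf hf0, integral_withDensity_ofReal hf hf0,
    integral_withDensity_ofReal hf hf0]
  simp_rw [Pi.mul_apply, hφh_mul]
  rw [integral_sub hφf hφft, ← integral_add_right_eq_self (fun v => φ v * f (v - t)) t]
  simp

theorem sq_integral_sub_integral_shift_div_le_variance (hf : Measurable f) (hf0 : ∀ v, 0 ≤ f v)
    [IsProbabilityMeasure (volume.withDensity fun v => ENNReal.ofReal (f v))]
    (hft : ∀ v, f v = 0 → f (v - t) = 0) (hq : Integrable fun v => f (v - t) ^ 2 / f v)
    {φ : ℝ → ℝ} (hφ : MemLp φ 2 (volume.withDensity fun v => ENNReal.ofReal (f v))) :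
    (∫ v, φ v ∂volume.withDensity (fun v => ENNReal.ofReal (f v)) -
        ∫ v, φ (v + t) ∂volume.withDensity (fun v => ENNReal.ofReal (f v))) ^ 2 /
        ((∫ v, f (v - t) ^ 2 / f v) - 1) ≤
      Var[φ; volume.withDensity fun v => ENNReal.ofReal (f v)] := by
  rw [← covariance_shiftScore hf hf0 hft hq hφ, ← variance_shiftScore hf hf0 hft hq]
  exact div_le_of_le_mul₀ (variance_nonneg _ _) (variance_nonneg _ _)
    (covariance_sq_le_variance_mul_variance hφ (memLp_shiftScore hf hf0 hft hq))

end ShiftScore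

theorem stmt_0_general
    {Ω : Type*} [MeasurableSpace Ω] (μ : Measure Ω) [IsProbabilityMeasure μ]
    (ξ : Ω → ℝ) (hξ : Measurable ξ)
    (f : ℝ → ℝ) (hf_meas : Measurable f)
    (hf_pos : ∀ v : ℝ, 0 ≤ v → 0 < f v) (hf_zero : ∀ v : ℝ, v < 0 → f v = 0)
    (hlaw : Measure.map ξ μ = volume.withDensity fun v => ENNReal.ofReal (f v))
    (t : ℝ) (ht : 0 < t)
    (F : ℝ≥0∞)
    (hF : F = (∫⁻ v in Set.Ioi (0 : ℝ), ENNReal.ofReal ((f (v - t)) ^ 2 / f v)) - 1)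
    (φ : ℝ → ℝ) (hφ : Measurable φ)
    (hφ_sq : MemLp (fun ω => φ (ξ ω)) 2 μ) :
    variance (fun ω => φ (ξ ω)) μ ≥
      ((∫ ω, φ (ξ ω) ∂μ) - ∫ ω, φ (ξ ω + t) ∂μ) ^ 2 / F.toReal := by
  -- `F.toReal = 0` covers both `F = 0` and `F = ∞`, where the bound is `0`.
  rcases eq_or_ne F.toReal 0 with hF0 | hF0
  · rw [hF0, div_zero]
    exact variance_nonneg _ _
  have : IsProbabilityMeasure (volume.withDensity fun v => ENNReal.ofReal (f v)) :=
    hlaw ▸ Measure.isProbabilityMeasure_map hξ.aemeasurable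
  have hf0 (v : ℝ) : 0 ≤ f v := (lt_or_ge v 0).elim (fun hv => (hf_zero v hv).ge)
    fun hv => (hf_pos v hv).le
  have hft (v : ℝ) (hv : f v = 0) : f (v - t) = 0 :=
    hf_zero _ (by by_contra! hvt; exact (hf_pos v (by linarith)).ne' hv)
  rw [setLIntegral_Ioi_sq_shift_div hf_zero ht] at hF
  subst hF
  obtain ⟨hq, hFq⟩ := integrable_and_toReal_lintegral_sub_one
    (Measurable.aestronglyMeasurable (by fun_prop))
    (.of_forall fun v => div_nonneg (sq_nonneg _) (hf0 v)) hF0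
  have hφν := (memLp_map_measure_iff hφ.aestronglyMeasurable hξ.aemeasurable).2 hφ_sq
  rw [hlaw] at hφν
  have hvar : Var[fun ω => φ (ξ ω); μ] = Var[φ; μ.map ξ] :=
    (variance_map hφ.aemeasurable hξ.aemeasurable).symm
  rw [ge_iff_le, hFq, hvar, ← integral_map hξ.aemeasurable hφ.aestronglyMeasurable,
    ← integral_map (f := fun v => φ (v + t)) hξ.aemeasurable
      (Measurable.aestronglyMeasurable (by fun_prop)), hlaw]
  exact sq_integral_sub_integral_shift_div_le_variance hf_meas hf0 hft hq hφν

/-- Hammersley–Chapman–Robbins type inequality (Lemma 1 of the paper):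
if the law of the nonnegative random variable `ξ` has a bounded density `f`
supported on `[0,∞)`, `t > 0` is such that `0 < F(t) < ∞` where
`F(t) = ∫₀^∞ f(v-t)²/f(v) dv - 1`, and `φ` is a Borel function with
`φ(ξ)` square-integrable and `φ(ξ+t)` integrable, then
`Var{φ(ξ)} ≥ (E{φ(ξ)} − E{φ(ξ+t)})² / F(t)`. -/
theorem stmt_0
    {Ω : Type*} [MeasurableSpace Ω] (μ : Measure Ω) [IsProbabilityMeasure μ]
    (ξ : Ω → ℝ) (hξ : Measurable ξ) (hξ_nonneg : ∀ ω, 0 ≤ ξ ω)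
    (f : ℝ → ℝ) (hf_meas : Measurable f) (hf_bdd : ∃ C : ℝ, ∀ v, f v ≤ C)
    (hf_pos : ∀ v : ℝ, 0 ≤ v → 0 < f v) (hf_zero : ∀ v : ℝ, v < 0 → f v = 0)
    (hf_norm : ∫ v in Set.Ioi (0 : ℝ), f v = 1)
    (hlaw : Measure.map ξ μ = volume.withDensity fun v => ENNReal.ofReal (f v))
    (t : ℝ) (ht : 0 < t)
    (F : ℝ≥0∞)
    (hF : F = (∫⁻ v in Set.Ioi (0 : ℝ), ENNReal.ofReal ((f (v - t)) ^ 2 / f v)) - 1)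
    (hF_pos : 0 < F) (hF_fin : F < ∞)
    (φ : ℝ → ℝ) (hφ : Measurable φ)
    (hφ_sq : MemLp (fun ω => φ (ξ ω)) 2 μ)
    (hφ_t : Integrable (fun ω => φ (ξ ω + t)) μ) :
    variance (fun ω => φ (ξ ω)) μ ≥
      ((∫ ω, φ (ξ ω) ∂μ) - ∫ ω, φ (ξ ω + t) ∂μ) ^ 2 / F.toReal :=
  stmt_0_general μ ξ hξ f hf_meas hf_pos hf_zero hlaw t ht F hF φ hφ hφ_sq
end

section
/- J(t) tends to infinity as t → ∞: for every K > 0 there exists t₀ > 0 such that J(t) ≥ K (in [0,∞]) for all t ≥ t₀. -/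
/-!
Cauchy–Schwarz on `(t, ∞)`: the shifted density `f (· - t)` has mass one there, so
`1 = (∫_{v>t} f(v-t))² ≤ (∫_{v>t} f(v-t)²/f(v)) · ∫_{v>t} f(v) ≤ J(t) · ∫_{v>t} f(v)`,
and the tail mass `∫_{v>t} f` tends to `0`.
-/

open MeasureTheory Filter Set Topology
open scoped ENNReal

section CauchySchwarz

variable {α : Type*} [MeasurableSpace α] {μ : Measure α}

theorem lintegral_mul_sq_le_sq_mul_sq {a b : α → ℝ≥0∞} (ha : AEMeasurable a μ)
    (hb : AEMeasurable b μ) :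
    (∫⁻ x, a x * b x ∂μ) ^ 2 ≤ (∫⁻ x, a x ^ 2 ∂μ) * ∫⁻ x, b x ^ 2 ∂μ := by
  have hHolder := ENNReal.lintegral_mul_le_Lp_mul_Lq μ Real.HolderConjugate.two_two ha hb
  simp only [Pi.mul_apply, ENNReal.rpow_two] at hHolder
  have hsq : ∀ c : ℝ≥0∞, (c ^ (1 / 2 : ℝ)) ^ 2 = c := fun c => by
    rw [← ENNReal.rpow_natCast, ← ENNReal.rpow_mul]; norm_num
  calc (∫⁻ x, a x * b x ∂μ) ^ 2
      ≤ ((∫⁻ x, a x ^ 2 ∂μ) ^ (1 / 2 : ℝ) * (∫⁻ x, b x ^ 2 ∂μ) ^ (1 / 2 : ℝ)) ^ 2 := by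
        gcongr
    _ = (∫⁻ x, a x ^ 2 ∂μ) * ∫⁻ x, b x ^ 2 ∂μ := by rw [mul_pow, hsq, hsq]

theorem sq_lintegral_le_lintegral_sq_div_mul {g h : α → ℝ≥0∞} (hg : AEMeasurable g μ)
    (hh : AEMeasurable h μ) (h0 : ∀ᵐ x ∂μ, h x ≠ 0) (htop : ∀ᵐ x ∂μ, h x ≠ ∞) :
    (∫⁻ x, g x ∂μ) ^ 2 ≤ (∫⁻ x, g x ^ 2 / h x ∂μ) * ∫⁻ x, h x ∂μ := by
  set r : α → ℝ≥0∞ := fun x => h x ^ (1 / 2 : ℝ)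
  have hr_sq (x : α) : r x ^ 2 = h x := by
    rw [← ENNReal.rpow_natCast, ← ENNReal.rpow_mul]; norm_num
  have hsplit : ∀ᵐ x ∂μ, g x = g x / r x * r x := by
    filter_upwards [h0, htop] with x hx0 hxtop
    refine (ENNReal.div_mul_cancel ?_ ?_).symm
    · simp [r, ENNReal.rpow_eq_zero_iff, hx0, hxtop]
    · simp [r, ENNReal.rpow_eq_top_iff, hx0, hxtop]
  calc (∫⁻ x, g x ∂μ) ^ 2 = (∫⁻ x, g x / r x * r x ∂μ) ^ 2 := by rw [lintegral_congr_ae hsplit]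
    _ ≤ (∫⁻ x, (g x / r x) ^ 2 ∂μ) * ∫⁻ x, r x ^ 2 ∂μ :=
        lintegral_mul_sq_le_sq_mul_sq (hg.div (hh.pow_const _)) (hh.pow_const _)
    _ = (∫⁻ x, g x ^ 2 / h x ∂μ) * ∫⁻ x, h x ∂μ := by
        simp only [div_eq_mul_inv, mul_pow, ← ENNReal.inv_pow, hr_sq]

end CauchySchwarz

theorem tendsto_setLIntegral_Ioi_atTop_zero {α : Type*} [MeasurableSpace α] [LinearOrder α]
    [TopologicalSpace α] [OrderClosedTopology α] [OpensMeasurableSpace α]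
    [(atTop : Filter α).IsCountablyGenerated] {μ : Measure α} {F : α → ℝ≥0∞}
    (hF : ∃ a, ∫⁻ x in Ioi a, F x ∂μ ≠ ∞) :
    Tendsto (fun a => ∫⁻ x in Ioi a, F x ∂μ) atTop (𝓝 0) := by
  have hdens (a : α) : μ.withDensity F (Ioi a) = ∫⁻ x in Ioi a, F x ∂μ :=
    withDensity_apply F measurableSet_Ioi
  have hempty : ⋂ a : α, Ioi a = ∅ :=
    eq_empty_of_forall_notMem fun x hx => lt_irrefl x (mem_iInter.1 hx x)
  have hlim := tendsto_measure_iInter_atTop (μ := μ.withDensity F)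
    (fun a => measurableSet_Ioi.nullMeasurableSet) antitone_Ioi (by simpa only [hdens] using hF)
  simpa only [hempty, measure_empty, Function.comp_def, hdens] using hlim

theorem sq_setLIntegral_Ioi_zero_le_shift {F : ℝ → ℝ≥0∞} (hF : Measurable F) {t : ℝ}
    (h0 : ∀ v ∈ Ioi t, F v ≠ 0) (htop : ∀ v ∈ Ioi t, F v ≠ ∞) :
    (∫⁻ v in Ioi 0, F v) ^ 2 ≤ (∫⁻ v in Ioi t, F (v - t) ^ 2 / F v) * ∫⁻ v in Ioi t, F v := by
  have hshift : ∫⁻ v in Ioi t, F (v - t) = ∫⁻ v in Ioi 0, F v := by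
    have := (measurePreserving_sub_right volume t).setLIntegral_comp_preimage_emb
      (measurableEmbedding_subRight t) F (Ioi 0)
    rwa [preimage_sub_const_Ioi, zero_add] at this
  rw [← hshift]
  exact sq_lintegral_le_lintegral_sq_div_mul (hF.comp (measurable_sub_const t)).aemeasurable
    hF.aemeasurable (ae_restrict_of_forall_mem measurableSet_Ioi h0)
    (ae_restrict_of_forall_mem measurableSet_Ioi htop)

theorem inv_setLIntegral_Ioi_le_lintegral_shift_sq_div {f : ℝ → ℝ} (hf_meas : Measurable f)
    (hf_pos : ∀ v : ℝ, 0 ≤ v → 0 < f v) (hf_mass : ∫⁻ v in Ioi 0, ENNReal.ofReal (f v) = 1)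
    {t : ℝ} (ht : 0 ≤ t) :
    (∫⁻ v in Ioi t, ENNReal.ofReal (f v))⁻¹ ≤
      ∫⁻ v in Ioi 0, ENNReal.ofReal (f (v - t) ^ 2 / f v) := by
  have hpos (v : ℝ) (hv : v ∈ Ioi t) : 0 < f v := hf_pos v (ht.trans (le_of_lt hv))
  have hCS := sq_setLIntegral_Ioi_zero_le_shift hf_meas.ennreal_ofReal
    (fun v hv => (ENNReal.ofReal_pos.2 (hpos v hv)).ne') (fun v _ => ENNReal.ofReal_ne_top)
  rw [hf_mass, one_pow] at hCS
  calc (∫⁻ v in Ioi t, ENNReal.ofReal (f v))⁻¹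
      ≤ ∫⁻ v in Ioi t, ENNReal.ofReal (f (v - t)) ^ 2 / ENNReal.ofReal (f v) := by
        simpa only [one_div] using ENNReal.div_le_of_le_mul hCS
    _ = ∫⁻ v in Ioi t, ENNReal.ofReal (f (v - t) ^ 2 / f v) := by
        refine setLIntegral_congr_fun measurableSet_Ioi fun v hv => ?_
        have hshift_nonneg : 0 ≤ f (v - t) := (hf_pos _ (sub_nonneg.2 (le_of_lt hv))).le
        rw [ENNReal.ofReal_div_of_pos (hpos v hv), ENNReal.ofReal_pow hshift_nonneg]
    _ ≤ ∫⁻ v in Ioi 0, ENNReal.ofReal (f (v - t) ^ 2 / f v) :=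
        lintegral_mono_set (Ioi_subset_Ioi ht)

theorem stmt_4_general
    (f : ℝ → ℝ) (hf_meas : Measurable f)
    (hf_pos : ∀ v : ℝ, 0 ≤ v → 0 < f v)
    (hf_norm : ∫ v in Set.Ioi (0 : ℝ), f v = 1) :
    ∀ K : ℝ, 0 < K → ∃ t₀ : ℝ, 0 < t₀ ∧ ∀ t : ℝ, t₀ ≤ t →
      ENNReal.ofReal K ≤ ∫⁻ v in Set.Ioi (0 : ℝ), ENNReal.ofReal ((f (v - t)) ^ 2 / f v) := by
  intro K _
  have hf_mass : ∫⁻ v in Ioi 0, ENNReal.ofReal (f v) = 1 := by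
    have hint : IntegrableOn f (Ioi 0) := Integrable.of_integral_ne_zero (by simp [hf_norm])
    have hf_nonneg : 0 ≤ᵐ[volume.restrict (Ioi 0)] f :=
      ae_restrict_of_forall_mem measurableSet_Ioi fun v hv => (hf_pos v (le_of_lt hv)).le
    rw [← ofReal_integral_eq_lintegral_ofReal hint hf_nonneg, hf_norm, ENNReal.ofReal_one]
  have hlim : Tendsto (fun t => (∫⁻ v in Ioi t, ENNReal.ofReal (f v))⁻¹) atTop (𝓝 ∞) := by
    simpa using tendsto_inv_iff.2
      (tendsto_setLIntegral_Ioi_atTop_zero ⟨0, hf_mass ▸ ENNReal.one_ne_top⟩)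
  obtain ⟨t₁, ht₁⟩ :=
    eventually_atTop.1 (hlim.eventually (eventually_ge_nhds ENNReal.ofReal_lt_top))
  refine ⟨max t₁ 1, by positivity, fun t ht => (ht₁ t (le_of_max_le_left ht)).trans ?_⟩
  exact inv_setLIntegral_Ioi_le_lintegral_shift_sq_div hf_meas hf_pos hf_mass
    (zero_le_one.trans (le_of_max_le_right ht))

/-- For a probability density `f` supported on `[0,∞)`,
`J(t) = ∫₀^∞ f(v-t)²/f(v) dv` tends to infinity as `t → ∞`: for every `K > 0`
there exists `t₀ > 0` such that `J(t) ≥ K` (in `[0,∞]`) for all `t ≥ t₀`. -/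
theorem stmt_4
    (f : ℝ → ℝ) (hf_meas : Measurable f)
    (hf_pos : ∀ v : ℝ, 0 ≤ v → 0 < f v) (hf_zero : ∀ v : ℝ, v < 0 → f v = 0)
    (hf_norm : ∫ v in Set.Ioi (0 : ℝ), f v = 1) :
    ∀ K : ℝ, 0 < K → ∃ t₀ : ℝ, 0 < t₀ ∧ ∀ t : ℝ, t₀ ≤ t →
      ENNReal.ofReal K ≤ ∫⁻ v in Set.Ioi (0 : ℝ), ENNReal.ofReal ((f (v - t)) ^ 2 / f v) :=
  stmt_4_general f hf_meas hf_pos hf_norm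
end

section
/- Let ξ be a nonnegative real random variable whose law has density f, let η be a random variable with values in a measurable space E, independent of ξ, let t > 0 be such that 0 < F(t) < ∞, and let φ : [0,∞) × E → ℝ be a measurable function such that φ(ξ, η) is square-integrable and φ(ξ + t, η) is integrable. Then Var{φ(ξ, η)} ≥ (E{φ(ξ, η)} − E{φ(ξ + t, η)})² / F(t). -/
open MeasureTheory ProbabilityTheory
open scoped ENNReal

/-!
Let `r(v) = f(v - t) / f(v)` be the likelihood ratio of the law of `ξ + t` with respect to the
law of `ξ`; it is a genuine density because `f(· - t)` vanishes wherever `f` does. By independence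
the law `π` of `(ξ, η)` is a product measure, so reweighting `π` by `r(ξ)` is the same as
translating `ξ` by `t`: `E[φ(ξ, η) r(ξ)] = E[φ(ξ + t, η)]` and `E[r(ξ)] = 1`. Hence
`E[φ(ξ + t, η)] - E[φ(ξ, η)] = Cov(φ(ξ, η), r(ξ))`, and the Cauchy–Schwarz inequality for the
covariance gives the bound, since `Var r(ξ) = E[r(ξ)²] - 1 = J(t) - 1 = F(t)`.
-/

namespace ProbabilityTheory

variable {Ω : Type*} [MeasurableSpace Ω] {μ : Measure Ω}

lemma covariance_sq_le_variance_mul_variance [IsFiniteMeasure μ] {X Y : Ω → ℝ}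
    (hX : MemLp X 2 μ) (hY : MemLp Y 2 μ) : cov[X, Y; μ] ^ 2 ≤ Var[X; μ] * Var[Y; μ] := by
  have hquad : ∀ c : ℝ, 0 ≤ Var[Y; μ] * (c * c) + 2 * cov[X, Y; μ] * c + Var[X; μ] := by
    intro c
    have := variance_nonneg (c • Y + X) μ
    rw [variance_add (hY.const_smul c) hX, variance_smul, covariance_smul_left,
      covariance_comm] at this
    linarith
  have := discrim_le_zero hquad
  rw [discrim] at this
  linarith

end ProbabilityTheory

namespace MeasureTheory

lemma map_add_right_withDensity {G : Type*} [MeasurableSpace G] [AddGroup G] [MeasurableAdd G]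
    (μ : Measure G) [μ.IsAddRightInvariant] {g : G → ℝ≥0∞} (hg : Measurable g) (t : G) :
    (μ.withDensity g).map (· + t) = μ.withDensity fun x => g (x - t) := by
  have hg_sub : Measurable fun x => g (x - t) := by
    simp_rw [sub_eq_add_neg]
    exact hg.comp (measurable_add_const (-t))
  refine Measure.ext_of_lintegral _ fun ψ hψ => ?_
  rw [lintegral_map hψ (measurable_add_const t),
    lintegral_withDensity_eq_lintegral_mul₀ hg.aemeasurable (by fun_prop),
    lintegral_withDensity_eq_lintegral_mul _ hg_sub hψ]
  simpa using lintegral_add_right_eq_self (μ := μ) (fun x => g (x - t) * ψ x) t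

lemma prod_withDensity_fst_eq_map_prodMap {β γ : Type*} [MeasurableSpace β] [MeasurableSpace γ]
    {ν : Measure β} {ρ : Measure γ} [SFinite ν] [SFinite ρ] {g : β → ℝ≥0∞} (hg : Measurable g)
    {T : β → β} (hT : Measurable T) (h : ν.withDensity g = ν.map T) :
    (ν.prod ρ).withDensity (fun p => g p.1) = (ν.prod ρ).map (Prod.map T id) := by
  rw [← prod_withDensity_left hg, h, ← Measure.map_prod_map ν ρ hT measurable_id, Measure.map_id]

variable {α : Type*} [MeasurableSpace α] {μ : Measure α} {g : α → ℝ} {T : α → α}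

lemma integral_mul_eq_integral_comp_of_withDensity_eq_map (hg : Measurable g)
    (hg0 : ∀ x, 0 ≤ g x) (hT : Measurable T)
    (h : μ.withDensity (fun x => ENNReal.ofReal (g x)) = μ.map T) {ψ : α → ℝ}
    (hψ : Measurable ψ) : ∫ x, ψ x * g x ∂μ = ∫ x, ψ (T x) ∂μ := by
  rw [← integral_map hT.aemeasurable hψ.aestronglyMeasurable, ← h,
    integral_withDensity_eq_integral_toReal_smul hg.ennreal_ofReal
      (ae_of_all _ fun _ => ENNReal.ofReal_lt_top)]
  simp [ENNReal.toReal_ofReal (hg0 _), mul_comm]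

lemma integral_eq_one_of_withDensity_eq_map [IsProbabilityMeasure μ] (hg : Measurable g)
    (hg0 : ∀ x, 0 ≤ g x) (hT : Measurable T)
    (h : μ.withDensity (fun x => ENNReal.ofReal (g x)) = μ.map T) : ∫ x, g x ∂μ = 1 := by
  simpa using integral_mul_eq_integral_comp_of_withDensity_eq_map hg hg0 hT h
    (measurable_const (a := (1 : ℝ)))

end MeasureTheory

namespace ProbabilityTheory

variable {α : Type*} [MeasurableSpace α] {μ : Measure α} [IsProbabilityMeasure μ] {g : α → ℝ}
  {T : α → α}

theorem sq_integral_sub_integral_comp_le_variance_mul_variance (hg : Measurable g)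
    (hg0 : ∀ x, 0 ≤ g x) (hT : Measurable T)
    (h : μ.withDensity (fun x => ENNReal.ofReal (g x)) = μ.map T) (hg2 : MemLp g 2 μ)
    {ψ : α → ℝ} (hψ : Measurable ψ) (hψ2 : MemLp ψ 2 μ) :
    (∫ x, ψ x ∂μ - ∫ x, ψ (T x) ∂μ) ^ 2 ≤ Var[ψ; μ] * Var[g; μ] := by
  have hcov : cov[ψ, g; μ] = ∫ x, ψ (T x) ∂μ - ∫ x, ψ x ∂μ := by
    rw [covariance_eq_sub hψ2 hg2, integral_eq_one_of_withDensity_eq_map hg hg0 hT h, mul_one]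
    exact congrArg (· - _) (integral_mul_eq_integral_comp_of_withDensity_eq_map hg hg0 hT h hψ)
  calc (∫ x, ψ x ∂μ - ∫ x, ψ (T x) ∂μ) ^ 2 = cov[ψ, g; μ] ^ 2 := by rw [hcov]; ring
    _ ≤ Var[ψ; μ] * Var[g; μ] := covariance_sq_le_variance_mul_variance hψ2 hg2

end ProbabilityTheory

section ShiftRatio

variable {G : Type*} [AddGroup G]

noncomputable def shiftRatio (f : G → ℝ) (t v : G) : ℝ := f (v - t) / f v

variable {f : G → ℝ}

lemma shiftRatio_nonneg (hf0 : ∀ v, 0 ≤ f v) (t v : G) : 0 ≤ shiftRatio f t v :=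
  div_nonneg (hf0 _) (hf0 _)

variable [MeasurableSpace G] [MeasurableAdd G]

lemma measurable_shiftRatio (hf : Measurable f) (t : G) : Measurable (shiftRatio f t) := by
  have hf_sub : Measurable fun v => f (v - t) := by
    simp_rw [sub_eq_add_neg]
    exact hf.comp (measurable_add_const (-t))
  exact hf_sub.div hf

lemma withDensity_shiftRatio (μ : Measure G) [μ.IsAddRightInvariant] (hf : Measurable f)
    (hf0 : ∀ v, 0 ≤ f v) {t : G} (hsupp : ∀ v, f v = 0 → f (v - t) = 0) :
    (μ.withDensity fun v => ENNReal.ofReal (f v)).withDensity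
        (fun v => ENNReal.ofReal (shiftRatio f t v)) =
      (μ.withDensity fun v => ENNReal.ofReal (f v)).map (· + t) := by
  rw [map_add_right_withDensity _ hf.ennreal_ofReal, ← withDensity_mul _ hf.ennreal_ofReal
    (measurable_shiftRatio hf t).ennreal_ofReal]
  congr 1
  funext v
  rcases eq_or_ne (f v) 0 with h | h
  · simp [h, hsupp v h]
  · rw [Pi.mul_apply, ← ENNReal.ofReal_mul (hf0 v), shiftRatio, mul_div_cancel₀ _ h]

lemma lintegral_sq_shiftRatio (μ : Measure G) (hf : Measurable f) (hf0 : ∀ v, 0 ≤ f v) (t : G) :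
    ∫⁻ v, ENNReal.ofReal (shiftRatio f t v ^ 2) ∂(μ.withDensity fun v => ENNReal.ofReal (f v)) =
      ∫⁻ v, ENNReal.ofReal (f (v - t) ^ 2 / f v) ∂μ := by
  rw [lintegral_withDensity_eq_lintegral_mul _ hf.ennreal_ofReal
    ((measurable_shiftRatio hf t).pow_const 2).ennreal_ofReal]
  refine lintegral_congr fun v => ?_
  rw [Pi.mul_apply, ← ENNReal.ofReal_mul (hf0 v), shiftRatio]
  rcases eq_or_ne (f v) 0 with h | h
  · simp [h]
  · congr 1
    field_simp

lemma memLp_two_shiftRatio (μ : Measure G) (hf : Measurable f) (hf0 : ∀ v, 0 ≤ f v) (t : G)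
    (hJ : ∫⁻ v, ENNReal.ofReal (f (v - t) ^ 2 / f v) ∂μ ≠ ∞) :
    MemLp (shiftRatio f t) 2 (μ.withDensity fun v => ENNReal.ofReal (f v)) := by
  have hr := measurable_shiftRatio hf t
  rw [memLp_two_iff_integrable_sq hr.aestronglyMeasurable]
  refine ⟨(hr.pow_const 2).aestronglyMeasurable, ?_⟩
  rw [hasFiniteIntegral_iff_ofReal (ae_of_all _ fun v => sq_nonneg _),
    lintegral_sq_shiftRatio μ hf hf0 t]
  exact hJ.lt_top

lemma variance_shiftRatio (μ : Measure G) [μ.IsAddRightInvariant]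
    [IsProbabilityMeasure (μ.withDensity fun v => ENNReal.ofReal (f v))] (hf : Measurable f)
    (hf0 : ∀ v, 0 ≤ f v) {t : G} (hsupp : ∀ v, f v = 0 → f (v - t) = 0)
    (hJ : ∫⁻ v, ENNReal.ofReal (f (v - t) ^ 2 / f v) ∂μ ≠ ∞) :
    Var[shiftRatio f t; μ.withDensity fun v => ENNReal.ofReal (f v)] =
      (∫⁻ v, ENNReal.ofReal (f (v - t) ^ 2 / f v) ∂μ - 1).toReal := by
  have hr := measurable_shiftRatio hf t
  have hvar : Var[shiftRatio f t; μ.withDensity fun v => ENNReal.ofReal (f v)] =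
      (∫⁻ v, ENNReal.ofReal (f (v - t) ^ 2 / f v) ∂μ).toReal - 1 := by
    rw [variance_eq_sub (memLp_two_shiftRatio μ hf hf0 t hJ),
      integral_eq_one_of_withDensity_eq_map hr (shiftRatio_nonneg hf0 t) (measurable_add_const t)
        (withDensity_shiftRatio μ hf hf0 hsupp), one_pow, ← lintegral_sq_shiftRatio μ hf hf0 t,
      ← integral_eq_lintegral_of_nonneg_ae (ae_of_all _ fun v => sq_nonneg _)
        (hr.pow_const 2).aestronglyMeasurable]
    rfl
  have hJ_ge_one : 1 ≤ ∫⁻ v, ENNReal.ofReal (f (v - t) ^ 2 / f v) ∂μ := by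
    rw [← ENNReal.toReal_le_toReal ENNReal.one_ne_top hJ, ENNReal.toReal_one]
    linarith [variance_nonneg (shiftRatio f t) (μ.withDensity fun v => ENNReal.ofReal (f v))]
  rw [ENNReal.toReal_sub_of_le hJ_ge_one hJ, ENNReal.toReal_one, hvar]

theorem sq_integral_sub_integral_shift_le {E : Type*} [MeasurableSpace E] (μ : Measure G)
    [μ.IsAddRightInvariant] [IsProbabilityMeasure (μ.withDensity fun v => ENNReal.ofReal (f v))]
    (ρ : Measure E) [IsProbabilityMeasure ρ] (hf : Measurable f) (hf0 : ∀ v, 0 ≤ f v) {t : G}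
    (hsupp : ∀ v, f v = 0 → f (v - t) = 0)
    (hJ : ∫⁻ v, ENNReal.ofReal (f (v - t) ^ 2 / f v) ∂μ ≠ ∞) {φ : G × E → ℝ} (hφ : Measurable φ)
    (hφ2 : MemLp φ 2 ((μ.withDensity fun v => ENNReal.ofReal (f v)).prod ρ)) :
    (∫ p, φ p ∂(μ.withDensity fun v => ENNReal.ofReal (f v)).prod ρ -
        ∫ p, φ (p.1 + t, p.2) ∂(μ.withDensity fun v => ENNReal.ofReal (f v)).prod ρ) ^ 2 ≤
      Var[φ; (μ.withDensity fun v => ENNReal.ofReal (f v)).prod ρ] *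
        (∫⁻ v, ENNReal.ofReal (f (v - t) ^ 2 / f v) ∂μ - 1).toReal := by
  have hr := measurable_shiftRatio hf t
  have hg : Measurable fun p : G × E => shiftRatio f t p.1 := hr.comp measurable_fst
  have hshift := prod_withDensity_fst_eq_map_prodMap (ρ := ρ) hr.ennreal_ofReal
    (measurable_add_const t) (withDensity_shiftRatio μ hf hf0 hsupp)
  rw [← variance_shiftRatio μ hf hf0 hsupp hJ,
    ← (measurePreserving_fst (ν := ρ)).variance_fun_comp hr.aemeasurable]
  exact sq_integral_sub_integral_comp_le_variance_mul_variance hg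
    (fun p => shiftRatio_nonneg hf0 t p.1) ((measurable_add_const t).prodMap measurable_id)
    hshift ((memLp_two_shiftRatio μ hf hf0 t hJ).comp_fst ρ) hφ hφ2

end ShiftRatio

lemma setLIntegral_Ioi_zero_sq_shift_div {f : ℝ → ℝ} (hf_zero : ∀ v, v < 0 → f v = 0) {t : ℝ}
    (ht : 0 < t) :
    ∫⁻ v in Set.Ioi 0, ENNReal.ofReal (f (v - t) ^ 2 / f v) =
      ∫⁻ v, ENNReal.ofReal (f (v - t) ^ 2 / f v) := by
  refine setLIntegral_eq_of_support_subset fun v hv => ?_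
  by_contra h
  rw [Set.mem_Ioi, not_lt] at h
  exact hv (by simp [hf_zero (v - t) (by linarith)])

theorem stmt_6_general
    {Ω : Type*} [MeasurableSpace Ω] (μ : Measure Ω) [IsProbabilityMeasure μ]
    {E : Type*} [MeasurableSpace E]
    (ξ : Ω → ℝ) (hξ : Measurable ξ)
    (η : Ω → E) (hη : Measurable η)
    (h_indep : IndepFun ξ η μ)
    (f : ℝ → ℝ) (hf_meas : Measurable f)
    (hf_pos : ∀ v : ℝ, 0 ≤ v → 0 < f v) (hf_zero : ∀ v : ℝ, v < 0 → f v = 0)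
    (hlaw : Measure.map ξ μ = volume.withDensity fun v => ENNReal.ofReal (f v))
    (t : ℝ) (ht : 0 < t)
    (F : ℝ≥0∞)
    (hF : F = (∫⁻ v in Set.Ioi (0 : ℝ), ENNReal.ofReal ((f (v - t)) ^ 2 / f v)) - 1)
    (φ : ℝ × E → ℝ) (hφ : Measurable φ)
    (hφ_sq : MemLp (fun ω => φ (ξ ω, η ω)) 2 μ) :
    variance (fun ω => φ (ξ ω, η ω)) μ ≥
      ((∫ ω, φ (ξ ω, η ω) ∂μ) - ∫ ω, φ (ξ ω + t, η ω) ∂μ) ^ 2 / F.toReal := by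
  rw [setLIntegral_Ioi_zero_sq_shift_div hf_zero ht] at hF
  -- If `J = ∞` then `F = ∞`, so `F.toReal = 0` and the right-hand side is `0` since `x / 0 = 0`;
  -- the same convention covers `F = 0` in the last step.
  rcases eq_or_ne (∫⁻ v, ENNReal.ofReal (f (v - t) ^ 2 / f v)) ∞ with hJ | hJ
  · simp [hF, hJ]
  have hf0 : ∀ v, 0 ≤ f v := fun v =>
    (lt_or_ge v 0).elim (fun h => (hf_zero v h).ge) fun h => (hf_pos v h).le
  have hsupp : ∀ v, f v = 0 → f (v - t) = 0 := fun v hv =>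
    hf_zero _ (by by_contra! h; exact (hf_pos v (by linarith)).ne' hv)
  have : IsProbabilityMeasure (volume.withDensity fun v => ENNReal.ofReal (f v)) :=
    hlaw ▸ Measure.isProbabilityMeasure_map hξ.aemeasurable
  have : IsProbabilityMeasure (μ.map η) := Measure.isProbabilityMeasure_map hη.aemeasurable
  have hZ : AEMeasurable (fun ω => (ξ ω, η ω)) μ := (hξ.prodMk hη).aemeasurable
  have hpair : μ.map (fun ω => (ξ ω, η ω)) =
      (volume.withDensity fun v => ENNReal.ofReal (f v)).prod (μ.map η) :=
    hlaw ▸ (indepFun_iff_map_prod_eq_prod_map_map hξ.aemeasurable hη.aemeasurable).mp h_indep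
  have hφ_sq_pair : MemLp φ 2 (μ.map fun ω => (ξ ω, η ω)) :=
    (memLp_map_measure_iff hφ.aestronglyMeasurable hZ).mpr hφ_sq
  rw [hpair] at hφ_sq_pair
  have hφT : Measurable fun p : ℝ × E => φ (p.1 + t, p.2) := by fun_prop
  have hbound :=
    sq_integral_sub_integral_shift_le volume (μ.map η) hf_meas hf0 hsupp hJ hφ hφ_sq_pair
  rw [← hF, ← hpair, variance_map hφ.aemeasurable hZ, integral_map hZ hφ.aestronglyMeasurable,
    integral_map hZ hφT.aestronglyMeasurable] at hbound
  exact div_le_of_le_mul₀ ENNReal.toReal_nonneg (variance_nonneg _ _) hbound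

/-- Conditional-variance version of the Hammersley–Chapman–Robbins inequality:
if `ξ` is a nonnegative random variable whose law has a bounded density `f`
supported on `[0,∞)`, `η` is a random variable with values in a measurable space `E`
independent of `ξ`, `t > 0` satisfies `0 < F(t) < ∞`, and `φ` is measurable with
`φ(ξ,η)` square-integrable and `φ(ξ+t,η)` integrable, then
`Var{φ(ξ,η)} ≥ (E{φ(ξ,η)} − E{φ(ξ+t,η)})² / F(t)`. -/
theorem stmt_6
    {Ω : Type*} [MeasurableSpace Ω] (μ : Measure Ω) [IsProbabilityMeasure μ]
    {E : Type*} [MeasurableSpace E]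
    (ξ : Ω → ℝ) (hξ : Measurable ξ) (hξ_nonneg : ∀ ω, 0 ≤ ξ ω)
    (η : Ω → E) (hη : Measurable η)
    (h_indep : IndepFun ξ η μ)
    (f : ℝ → ℝ) (hf_meas : Measurable f) (hf_bdd : ∃ C : ℝ, ∀ v, f v ≤ C)
    (hf_pos : ∀ v : ℝ, 0 ≤ v → 0 < f v) (hf_zero : ∀ v : ℝ, v < 0 → f v = 0)
    (hf_norm : ∫ v in Set.Ioi (0 : ℝ), f v = 1)
    (hlaw : Measure.map ξ μ = volume.withDensity fun v => ENNReal.ofReal (f v))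
    (t : ℝ) (ht : 0 < t)
    (F : ℝ≥0∞)
    (hF : F = (∫⁻ v in Set.Ioi (0 : ℝ), ENNReal.ofReal ((f (v - t)) ^ 2 / f v)) - 1)
    (hF_pos : 0 < F) (hF_fin : F < ∞)
    (φ : ℝ × E → ℝ) (hφ : Measurable φ)
    (hφ_sq : MemLp (fun ω => φ (ξ ω, η ω)) 2 μ)
    (hφ_t : Integrable (fun ω => φ (ξ ω + t, η ω)) μ) :
    variance (fun ω => φ (ξ ω, η ω)) μ ≥
      ((∫ ω, φ (ξ ω, η ω) ∂μ) - ∫ ω, φ (ξ ω + t, η ω) ∂μ) ^ 2 / F.toReal :=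
  stmt_6_general μ ξ hξ η hη h_indep f hf_meas hf_pos hf_zero hlaw t ht F hF φ hφ hφ_sq
end

section
/- Let A be a bounded self-adjoint operator on ℓ²(ℤ), A^s = A + s·Π₀ with Π₀ the rank-one orthogonal projection onto the span of δ₀, and z ∈ ℂ with Im z ≠ 0. Then G(0,0;z) ≠ 0 and, for all x, y ∈ ℤ, lim_{s → ∞} G^s(x,y;z) = G(x,y;z) − G(x,0;z)·G(0,y;z)/G(0,0;z), where G(x,y;z) = ⟨δ_x, (A − z)^{-1} δ_y⟩ and G^s(x,y;z) = ⟨δ_x, (A^s − z)^{-1} δ_y⟩. -/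
/-!
With `R = (A - z)⁻¹`, the Aronszajn–Krein formula
`(A + s Π₀ - z)⁻¹ u = R u - s ⟪δ₀, R u⟫ / (1 + s G(0,0)) • R δ₀`
expresses `G^s` through `G`, and `s / (1 + s G(0,0)) → G(0,0)⁻¹` as `s → ∞`.
Both `G(0,0) ≠ 0` and `1 + s G(0,0) ≠ 0` come from `Im ⟪(A - z) v, v⟫ = Im z ‖v‖²`
for self-adjoint `A`, applied to `v = R δ₀`.
-/

open Filter
open scoped InnerProductSpace Topology

section RankOnePerturbation

variable {𝕜 E : Type*} [RCLike 𝕜] [NormedAddCommGroup E] [InnerProductSpace 𝕜 E]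
  {T R S P : E →L[𝕜] E} {e : E} {c : 𝕜}

theorem leftInverse_add_rankOne_apply (hP : ∀ u, P u = ⟪e, u⟫_𝕜 • e) (hR : T ∘L R = 1)
    (hS : S ∘L (T + c • P) = 1) (u : E) :
    S u = R u - (c * ⟪e, R u⟫_𝕜) • S e := by
  have hSR := congr($hS (R u))
  have hTR : T (R u) = u := congr($hR u)
  simp only [ContinuousLinearMap.comp_apply, add_apply, smul_apply, one_apply_eq_self, hTR, hP,
    map_add, map_smul, smul_smul] at hSR
  exact eq_sub_of_add_eq hSR

theorem leftInverse_add_rankOne_apply_eq (hP : ∀ u, P u = ⟪e, u⟫_𝕜 • e) (hR : T ∘L R = 1)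
    (hS : S ∘L (T + c • P) = 1) (hc : 1 + c * ⟪e, R e⟫_𝕜 ≠ 0) (u : E) :
    S u = R u - (c * ⟪e, R u⟫_𝕜 / (1 + c * ⟪e, R e⟫_𝕜)) • R e := by
  have hSe : (1 + c * ⟪e, R e⟫_𝕜)⁻¹ • R e = S e := by
    rw [inv_smul_eq_iff₀ hc, add_smul, one_smul, ← sub_eq_iff_eq_add]
    exact (leftInverse_add_rankOne_apply hP hR hS e).symm
  rw [leftInverse_add_rankOne_apply hP hR hS u, ← hSe, smul_smul, div_eq_mul_inv]

end RankOnePerturbation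

section Resolvent

variable {E : Type*} [NormedAddCommGroup E] [InnerProductSpace ℂ E] {A R : E →L[ℂ] E}

theorem im_inner_sub_smul_one_apply_self (hA : (A : E →ₗ[ℂ] E).IsSymmetric) (z : ℂ) (v : E) :
    (⟪(A - z • 1) v, v⟫_ℂ).im = z.im * ‖v‖ ^ 2 := by
  have hAv : (⟪A v, v⟫_ℂ).im = 0 := hA.im_inner_apply_self v
  simp [hAv, inner_self_eq_norm_sq_to_K, ← Complex.ofReal_pow, mul_comm]

theorem im_inner_apply_ne_zero_of_comp_eq_one (hA : (A : E →ₗ[ℂ] E).IsSymmetric) {z : ℂ}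
    (hz : z.im ≠ 0) (hR : (A - z • 1) ∘L R = 1) {e : E} (he : e ≠ 0) :
    (⟪e, R e⟫_ℂ).im ≠ 0 := by
  have hRe : (A - z • 1) (R e) = e := congr($hR e)
  have hRe0 : R e ≠ 0 := by
    rintro h
    rw [h, map_zero] at hRe
    exact he hRe.symm
  calc (⟪e, R e⟫_ℂ).im = (⟪(A - z • 1) (R e), R e⟫_ℂ).im := by rw [hRe]
    _ = z.im * ‖R e‖ ^ 2 := im_inner_sub_smul_one_apply_self hA z _
    _ ≠ 0 := mul_ne_zero hz (by positivity)

end Resolvent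

theorem Complex.one_add_ofReal_mul_ne_zero {w : ℂ} (hw : w.im ≠ 0) (s : ℝ) : 1 + s * w ≠ 0 := by
  intro h
  have him := congr_arg Complex.im h
  simp only [Complex.add_im, Complex.one_im, Complex.im_ofReal_mul, zero_add,
    Complex.zero_im, mul_eq_zero, hw, or_false] at him
  simp [him] at h

theorem Complex.tendsto_ofReal_div_one_add_ofReal_mul {g : ℂ} (hg : g ≠ 0) :
    Tendsto (fun s : ℝ => (s : ℂ) / (1 + s * g)) atTop (𝓝 g⁻¹) := by
  have hinv : Tendsto (fun s : ℝ => (s : ℂ)⁻¹) atTop (𝓝 0) := by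
    simpa using tendsto_ofReal_iff.mpr tendsto_inv_atTop_zero
  have hlim := (hinv.add_const g).inv₀ (by rwa [zero_add])
  rw [zero_add] at hlim
  refine hlim.congr' ?_
  filter_upwards [eventually_ne_atTop 0] with s hs
  have hs' : (s : ℂ) ≠ 0 := Complex.ofReal_ne_zero.mpr hs
  rw [show (s : ℂ)⁻¹ + g = (s : ℂ)⁻¹ * (1 + s * g) by field_simp, mul_inv, inv_inv,
    div_eq_mul_inv]

theorem stmt_10_general
    (δ : ℤ → lp (fun _ : ℤ => ℂ) 2) (hδ : ∀ x : ℤ, δ x = lp.single 2 x (1 : ℂ))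
    (A : lp (fun _ : ℤ => ℂ) 2 →L[ℂ] lp (fun _ : ℤ => ℂ) 2) (hA : IsSelfAdjoint A)
    (P0 : lp (fun _ : ℤ => ℂ) 2 →L[ℂ] lp (fun _ : ℤ => ℂ) 2)
    (hP0 : ∀ u, P0 u = (inner ℂ (δ 0) u : ℂ) • δ 0)
    (As : ℝ → (lp (fun _ : ℤ => ℂ) 2 →L[ℂ] lp (fun _ : ℤ => ℂ) 2))
    (hAs : ∀ s : ℝ, As s = A + (s : ℂ) • P0)
    (z : ℂ) (hz : z.im ≠ 0)
    (R : lp (fun _ : ℤ => ℂ) 2 →L[ℂ] lp (fun _ : ℤ => ℂ) 2)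
    (hR₁ : (A - z • (1 : lp (fun _ : ℤ => ℂ) 2 →L[ℂ] lp (fun _ : ℤ => ℂ) 2)) ∘L R = 1)
    (Rs : ℝ → (lp (fun _ : ℤ => ℂ) 2 →L[ℂ] lp (fun _ : ℤ => ℂ) 2))
    (hRs₂ : ∀ s : ℝ,
      Rs s ∘L (As s - z • (1 : lp (fun _ : ℤ => ℂ) 2 →L[ℂ] lp (fun _ : ℤ => ℂ) 2)) = 1)
    (G : ℤ → ℤ → ℂ) (Gs : ℝ → ℤ → ℤ → ℂ)
    (hG : ∀ x y : ℤ, G x y = inner ℂ (δ x) (R (δ y)))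
    (hGs : ∀ (s : ℝ) (x y : ℤ), Gs s x y = inner ℂ (δ x) (Rs s (δ y))) :
    G 0 0 ≠ 0 ∧
      ∀ x y : ℤ, Tendsto (fun s : ℝ => Gs s x y) atTop
        (nhds (G x y - G x 0 * G 0 y / G 0 0)) := by
  have hδ0 : δ 0 ≠ 0 := by
    rw [hδ, ← norm_ne_zero_iff, lp.norm_single (by norm_num)]
    norm_num
  have hG00_im : (G 0 0).im ≠ 0 := by
    rw [hG]
    exact im_inner_apply_ne_zero_of_comp_eq_one hA.isSymmetric hz hR₁ hδ0
  have hG00 : G 0 0 ≠ 0 := fun h => hG00_im (by rw [h, Complex.zero_im])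
  have hGs_eq (s : ℝ) (x y : ℤ) :
      Gs s x y = G x y - (s : ℂ) / (1 + s * G 0 0) * G 0 y * G x 0 := by
    have hRs : Rs s ∘L ((A - z • 1) + (s : ℂ) • P0) = 1 := by
      simpa only [hAs, add_sub_right_comm] using hRs₂ s
    have hden : 1 + (s : ℂ) * ⟪δ 0, R (δ 0)⟫_ℂ ≠ 0 := by
      rw [← hG]
      exact Complex.one_add_ofReal_mul_ne_zero hG00_im s
    rw [hGs, leftInverse_add_rankOne_apply_eq hP0 hR₁ hRs hden, inner_sub_right,
      inner_smul_right, ← hG, ← hG, ← hG, ← hG]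
    ring
  refine ⟨hG00, fun x y => ?_⟩
  simp_rw [hGs_eq]
  convert (((Complex.tendsto_ofReal_div_one_add_ofReal_mul hG00).mul_const (G 0 y)).mul_const
    (G x 0)).const_sub (G x y) using 2
  ring

/-- Let `A` be a bounded self-adjoint operator on `ℓ²(ℤ)`, `A^s = A + s·Π₀` with `Π₀`
the rank-one projection onto the span of `δ₀`, and `z ∈ ℂ` with `Im z ≠ 0`. Then
`G(0,0;z) ≠ 0` and, for all `x, y ∈ ℤ`,
`lim_{s → ∞} G^s(x,y;z) = G(x,y;z) − G(x,0;z)·G(0,y;z)/G(0,0;z)`,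
where `G(x,y;z) = ⟨δ_x, (A-z)⁻¹δ_y⟩` and `G^s(x,y;z) = ⟨δ_x, (A^s-z)⁻¹δ_y⟩`. -/
theorem stmt_10
    (δ : ℤ → lp (fun _ : ℤ => ℂ) 2) (hδ : ∀ x : ℤ, δ x = lp.single 2 x (1 : ℂ))
    (A : lp (fun _ : ℤ => ℂ) 2 →L[ℂ] lp (fun _ : ℤ => ℂ) 2) (hA : IsSelfAdjoint A)
    (P0 : lp (fun _ : ℤ => ℂ) 2 →L[ℂ] lp (fun _ : ℤ => ℂ) 2)
    (hP0 : ∀ u, P0 u = (inner ℂ (δ 0) u : ℂ) • δ 0)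
    (As : ℝ → (lp (fun _ : ℤ => ℂ) 2 →L[ℂ] lp (fun _ : ℤ => ℂ) 2))
    (hAs : ∀ s : ℝ, As s = A + (s : ℂ) • P0)
    (z : ℂ) (hz : z.im ≠ 0)
    (R : lp (fun _ : ℤ => ℂ) 2 →L[ℂ] lp (fun _ : ℤ => ℂ) 2)
    (hR₁ : (A - z • (1 : lp (fun _ : ℤ => ℂ) 2 →L[ℂ] lp (fun _ : ℤ => ℂ) 2)) ∘L R = 1)
    (hR₂ : R ∘L (A - z • (1 : lp (fun _ : ℤ => ℂ) 2 →L[ℂ] lp (fun _ : ℤ => ℂ) 2)) = 1)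
    (Rs : ℝ → (lp (fun _ : ℤ => ℂ) 2 →L[ℂ] lp (fun _ : ℤ => ℂ) 2))
    (hRs₁ : ∀ s : ℝ,
      (As s - z • (1 : lp (fun _ : ℤ => ℂ) 2 →L[ℂ] lp (fun _ : ℤ => ℂ) 2)) ∘L Rs s = 1)
    (hRs₂ : ∀ s : ℝ,
      Rs s ∘L (As s - z • (1 : lp (fun _ : ℤ => ℂ) 2 →L[ℂ] lp (fun _ : ℤ => ℂ) 2)) = 1)
    (G : ℤ → ℤ → ℂ) (Gs : ℝ → ℤ → ℤ → ℂ)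
    (hG : ∀ x y : ℤ, G x y = inner ℂ (δ x) (R (δ y)))
    (hGs : ∀ (s : ℝ) (x y : ℤ), Gs s x y = inner ℂ (δ x) (Rs s (δ y))) :
    G 0 0 ≠ 0 ∧
      ∀ x y : ℤ, Tendsto (fun s : ℝ => Gs s x y) atTop
        (nhds (G x y - G x 0 * G 0 y / G 0 0)) :=
  stmt_10_general δ hδ A hA P0 hP0 As hAs z hz R hR₁ Rs hRs₂ G Gs hG hGs
end

section
/- Let V : ℤ → ℝ be bounded, H the one-dimensional discrete Schrödinger operator with potential V on ℓ²(ℤ), and for t ∈ ℝ let H^t be obtained from H by replacing the potential value V(0) at the origin by V(0) + t (i.e. H^t = H + t·Π₀ with Π₀ the projection onto the span of δ₀). Then for every z ∈ ℂ with Im z ≠ 0 and all integers x ≥ 0 and y ≤ 0, lim_{t → ∞} G^t(x,y;z) = 0, where G^t(x,y;z) = ⟨δ_x, (H^t − z)^{-1} δ_y⟩. -/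
/-!
Put `u t = (H^t - z)⁻¹ δ_y`. Since `⟪w, H^t w⟫` is real, `|Im z| ‖u t‖ ≤ ‖δ_y‖ = 1` for every `t`,
and the equation `(H^t - z) u t = δ_y` at the origin reads `t * u t 0 = O(1)`, so `u t 0 → 0`.
For `x ≥ 1` let `v` be the restriction of `u t` to `{1, 2, …}`. Because `y ≤ 0`, the equation
holds without source on that half-line; pairing it with `v`, the only coupling between the two
half-lines is the hopping term between `0` and `1`, and taking imaginary parts gives
`|Im z| ‖v‖² ≤ |u t 1| |u t 0| ≤ |u t 0| / |Im z|`. Hence `|u t x|² ≤ |u t 0| / |Im z|² → 0`.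
-/

open Filter Topology ComplexConjugate
open scoped InnerProductSpace

section QuadraticForm

variable {E : Type*} [NormedAddCommGroup E] [InnerProductSpace ℂ E] {z : ℂ}

theorem im_inner_sub_smul {w a : E} (hw : (⟪w, a⟫_ℂ).im = 0) (z : ℂ) :
    (⟪w, a - z • w⟫_ℂ).im = -(z.im * ‖w‖ ^ 2) := by
  rw [inner_sub_right, inner_smul_right, inner_self_eq_norm_sq_to_K, Complex.sub_im, hw]
  simp [Complex.mul_im, ← Complex.ofReal_pow]

theorem abs_im_mul_norm_le_of_sub_smul_eq {w a f : E} (hw : (⟪w, a⟫_ℂ).im = 0)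
    (h : a - z • w = f) : |z.im| * ‖w‖ ≤ ‖f‖ := by
  have key : |z.im| * ‖w‖ ^ 2 ≤ ‖w‖ * ‖f‖ :=
    calc |z.im| * ‖w‖ ^ 2 = |(⟪w, f⟫_ℂ).im| := by
          rw [← h, im_inner_sub_smul hw, abs_neg, abs_mul, abs_sq]
      _ ≤ ‖⟪w, f⟫_ℂ‖ := Complex.abs_im_le_norm _
      _ ≤ ‖w‖ * ‖f‖ := norm_inner_le_norm _ _
  rcases (norm_nonneg w).eq_or_lt with hw | hw
  · rw [← hw, mul_zero]
    exact norm_nonneg f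
  · nlinarith

theorem abs_im_mul_norm_sq_le {A : E →L[ℂ] E} {u v : E} (hv : (⟪v, A v⟫_ℂ).im = 0)
    (hvu : ⟪v, u - v⟫_ℂ = 0) (h : ⟪v, A u - z • u⟫_ℂ = 0) :
    |z.im| * ‖v‖ ^ 2 ≤ ‖⟪v, A (u - v)⟫_ℂ‖ := by
  have hsplit : ⟪v, A u - z • u⟫_ℂ = ⟪v, A v - z • v⟫_ℂ + ⟪v, A (u - v)⟫_ℂ := by
    have : A u - z • u = (A v - z • v) + A (u - v) - z • (u - v) := by
      rw [map_sub, smul_sub]; abel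
    rw [this, inner_sub_right, inner_add_right, inner_smul_right, hvu, mul_zero, sub_zero]
  have him := congrArg Complex.im hsplit
  rw [h, Complex.add_im, im_inner_sub_smul hv, Complex.zero_im] at him
  calc |z.im| * ‖v‖ ^ 2 = |(⟪v, A (u - v)⟫_ℂ).im| := by
        rw [← abs_sq ‖v‖, ← abs_mul]; congr 1; linarith
    _ ≤ ‖⟪v, A (u - v)⟫_ℂ‖ := Complex.abs_im_le_norm _

end QuadraticForm

theorem tendsto_zero_of_norm_sq_le {α E : Type*} [SeminormedAddGroup E] {l : Filter α}
    {f : α → E} {g : α → ℝ} (hfg : ∀ a, ‖f a‖ ^ 2 ≤ g a) (hg : Tendsto g l (𝓝 0)) :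
    Tendsto f l (𝓝 0) :=
  squeeze_zero_norm (fun a => Real.le_sqrt_of_sq_le (hfg a)) (by simpa using hg.sqrt)

local notation "ℓ²ℤ" => lp (fun _ : ℤ => ℂ) 2

namespace DiscreteSchrodinger

theorem inner_eq_tsum_conj_mul (f g : ℓ²ℤ) : ⟪f, g⟫_ℂ = ∑' k, conj (f k) * g k := by
  simp [lp.inner_eq_tsum, RCLike.inner_apply, mul_comm]

theorem summable_conj_mul (f g : ℓ²ℤ) : Summable fun k => conj (f k) * g k := by
  simpa [RCLike.inner_apply, mul_comm] using lp.summable_inner (𝕜 := ℂ) f g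

theorem inner_single_one_left (k : ℤ) (f : ℓ²ℤ) : ⟪lp.single 2 k (1 : ℂ), f⟫_ℂ = f k := by
  simp [lp.inner_single_left, RCLike.inner_apply]

theorem inner_eq_zero_of_disjoint {f g : ℓ²ℤ} (h : ∀ k, f k = 0 ∨ g k = 0) : ⟪f, g⟫_ℂ = 0 := by
  rw [inner_eq_tsum_conj_mul]
  refine (tsum_congr fun k => ?_).trans tsum_zero
  rcases h k with h | h <;> simp [h]

theorem summable_conj_mul_apply_add (u : ℓ²ℤ) (c : ℤ) :
    Summable fun k => conj (u k) * u (k + c) := by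
  have hmem : Memℓp (fun k => u (k + c)) 2 := by
    refine memℓp_gen ?_
    simpa [Function.comp_def] using
      ((Equiv.addRight c).summable_iff (f := fun k => ‖u k‖ ^ (2 : ENNReal).toReal)).2
        ((lp.memℓp u).summable (by norm_num))
  exact summable_conj_mul u ⟨_, hmem⟩

def IsSchrodinger (V : ℤ → ℝ) (H : ℓ²ℤ →L[ℂ] ℓ²ℤ) : Prop :=
  ∀ (u : ℓ²ℤ) (x : ℤ), (H u) x = -u (x + 1) - u (x - 1) + 2 * u x + (V x : ℂ) * u x

variable {V : ℤ → ℝ} {H : ℓ²ℤ →L[ℂ] ℓ²ℤ}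

theorem im_inner_self_apply (hH : IsSchrodinger V H) (u : ℓ²ℤ) : (⟪u, H u⟫_ℂ).im = 0 := by
  have hfwd := (summable_conj_mul_apply_add u 1).mapL Complex.imCLM
  have hbwd := (summable_conj_mul_apply_add u (-1)).mapL Complex.imCLM
  simp only [Complex.imCLM_apply, ← sub_eq_add_neg] at hfwd hbwd
  have hterm : ∀ k, (conj (u k) * H u k).im
      = -(conj (u k) * u (k + 1)).im - (conj (u k) * u (k - 1)).im := by
    intro k
    rw [hH]
    simp [Complex.mul_im]
    ring
  have hshift : ∑' k, (conj (u k) * u (k - 1)).im = -∑' k, (conj (u k) * u (k + 1)).im := by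
    rw [← (Equiv.addRight (1 : ℤ)).tsum_eq, ← tsum_neg]
    congr 1
    ext k
    rw [Equiv.coe_addRight, add_sub_cancel_right, ← Complex.conj_im, map_mul, Complex.conj_conj,
      mul_comm]
  rw [inner_eq_tsum_conj_mul, Complex.im_tsum (summable_conj_mul u (H u)), tsum_congr hterm,
    hfwd.neg.tsum_sub hbwd, tsum_neg, hshift]
  ring

theorem inner_apply_of_support (hH : IsSchrodinger V H) {v w : ℓ²ℤ} (hv : ∀ k ≤ 0, v k = 0)
    (hw : ∀ k, 1 ≤ k → w k = 0) : ⟪v, H w⟫_ℂ = -(conj (v 1) * w 0) := by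
  have hterm : ∀ k, conj (v k) * H w k = if k = 1 then -(conj (v 1) * w 0) else 0 := by
    intro k
    rw [hH]
    split_ifs with hk
    · subst hk
      simp [hw 1 le_rfl, hw 2 (by norm_num)]
    · rcases le_or_gt k 0 with hk0 | hk0
      · simp [hv k hk0]
      · simp [hw k (by omega), hw (k + 1) (by omega), hw (k - 1) (by omega)]
  rw [inner_eq_tsum_conj_mul, tsum_congr hterm, tsum_ite_eq]

noncomputable def restrictPos (u : ℓ²ℤ) : ℓ²ℤ :=
  ⟨(Set.Ici 1).indicator u, (lp.memℓp u).mono' (norm_indicator_le_norm_self u)⟩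

theorem restrictPos_apply (u : ℓ²ℤ) (k : ℤ) : restrictPos u k = if 1 ≤ k then u k else 0 := by
  simp [restrictPos, Set.indicator_apply]

theorem abs_im_mul_norm_restrictPos_sq_le (hH : IsSchrodinger V H) {z : ℂ} {u : ℓ²ℤ}
    (hu : ∀ k, 1 ≤ k → (H u - z • u) k = 0) :
    |z.im| * ‖restrictPos u‖ ^ 2 ≤ ‖u 1‖ * ‖u 0‖ := by
  have hsupp : ∀ k ≤ 0, restrictPos u k = 0 := fun k hk => by
    rw [restrictPos_apply, if_neg (by omega)]
  have hcompl : ∀ k, 1 ≤ k → (u - restrictPos u) k = 0 := fun k hk => by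
    simp [restrictPos_apply, hk]
  have hdisj : ∀ {g : ℓ²ℤ}, (∀ k, 1 ≤ k → g k = 0) → ⟪restrictPos u, g⟫_ℂ = 0 := fun hg =>
    inner_eq_zero_of_disjoint fun k => (le_or_gt k 0).imp (hsupp k) (hg k)
  calc |z.im| * ‖restrictPos u‖ ^ 2 ≤ ‖⟪restrictPos u, H (u - restrictPos u)⟫_ℂ‖ :=
        abs_im_mul_norm_sq_le (im_inner_self_apply hH _) (hdisj hcompl) (hdisj hu)
    _ = ‖u 1‖ * ‖u 0‖ := by
        rw [inner_apply_of_support hH hsupp hcompl]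
        simp [restrictPos_apply]

theorem abs_im_mul_norm_apply_sq_le (hH : IsSchrodinger V H) {z : ℂ} {u : ℓ²ℤ}
    (hu : ∀ k, 1 ≤ k → (H u - z • u) k = 0) {x : ℤ} (hx : 1 ≤ x) :
    |z.im| * ‖u x‖ ^ 2 ≤ ‖u 1‖ * ‖u 0‖ := by
  have hux : ‖u x‖ ≤ ‖restrictPos u‖ := by
    simpa [restrictPos_apply, hx] using lp.norm_apply_le_norm two_ne_zero (restrictPos u) x
  calc |z.im| * ‖u x‖ ^ 2 ≤ |z.im| * ‖restrictPos u‖ ^ 2 := by gcongr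
    _ ≤ ‖u 1‖ * ‖u 0‖ := abs_im_mul_norm_restrictPos_sq_le hH hu

theorem tendsto_apply_zero_of_add_smul_single (f : ℓ²ℤ) (z : ℂ) {u : ℝ → ℓ²ℤ} {C : ℝ}
    (hu : ∀ t, ‖u t‖ ≤ C)
    (h : ∀ t : ℝ, H (u t) + ((t : ℂ) * u t 0) • lp.single 2 0 1 - z • u t = f) :
    Tendsto (fun t => u t 0) atTop (𝓝 0) := by
  have hcoord : ∀ (g : ℓ²ℤ) k, ‖g k‖ ≤ ‖g‖ := lp.norm_apply_le_norm two_ne_zero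
  have hbound : ∀ t : ℝ, ‖(t : ℂ) * u t 0‖ ≤ ‖f‖ + (‖H‖ + ‖z‖) * C := by
    intro t
    have h0 : (t : ℂ) * u t 0 = f 0 - H (u t) 0 + z * u t 0 := by
      have := congrArg (fun g : ℓ²ℤ => g 0) (h t)
      simp only [lp.coeFn_sub, lp.coeFn_add, lp.coeFn_smul, Pi.sub_apply, Pi.add_apply,
        Pi.smul_apply, lp.single_apply_self, smul_eq_mul, mul_one] at this
      linear_combination this
    calc ‖(t : ℂ) * u t 0‖ ≤ ‖f 0‖ + ‖H (u t) 0‖ + ‖z‖ * ‖u t 0‖ := by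
          rw [h0, ← norm_mul]
          exact (norm_add_le _ _).trans (add_le_add_left (norm_sub_le _ _) _)
      _ ≤ ‖f‖ + ‖H‖ * ‖u t‖ + ‖z‖ * ‖u t‖ := by
          gcongr
          exacts [hcoord f 0, (hcoord _ 0).trans (H.le_opNorm _), hcoord _ 0]
      _ ≤ ‖f‖ + (‖H‖ + ‖z‖) * C := by
          rw [add_assoc, ← add_mul]
          gcongr
          exact hu t
  refine (Asymptotics.IsBigO.of_bound (‖f‖ + (‖H‖ + ‖z‖) * C) ?_).trans_tendsto
    tendsto_inv_atTop_zero
  filter_upwards [eventually_gt_atTop 0] with t ht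
  calc ‖u t 0‖ = ‖(t : ℂ) * u t 0‖ * ‖t⁻¹‖ := by
        rw [norm_mul, Complex.norm_real, mul_comm, ← mul_assoc, ← norm_mul, inv_mul_cancel₀ ht.ne',
          norm_one, one_mul]
    _ ≤ (‖f‖ + (‖H‖ + ‖z‖) * C) * ‖t⁻¹‖ := by gcongr; exact hbound t

theorem im_inner_add_smul_single (hH : IsSchrodinger V H) (t : ℝ) (w : ℓ²ℤ) :
    (⟪w, H w + ((t : ℂ) * w 0) • lp.single 2 0 1⟫_ℂ).im = 0 := by
  rw [inner_add_right, Complex.add_im, im_inner_self_apply hH, inner_smul_right,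
    lp.inner_single_right]
  simp [mul_assoc, Complex.mul_conj, RCLike.inner_apply]

theorem tendsto_apply_atTop (hH : IsSchrodinger V H) {z : ℂ} (hz : z.im ≠ 0) {y : ℤ} (hy : y ≤ 0)
    {u : ℝ → ℓ²ℤ}
    (hu : ∀ t : ℝ, H (u t) + ((t : ℂ) * u t 0) • lp.single 2 0 1 - z • u t = lp.single 2 y 1)
    {x : ℤ} (hx : 0 ≤ x) : Tendsto (fun t => u t x) atTop (𝓝 0) := by
  have hu_norm (t : ℝ) : ‖u t‖ ≤ |z.im|⁻¹ := by
    have := abs_im_mul_norm_le_of_sub_smul_eq (im_inner_add_smul_single hH t (u t)) (hu t)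
    rw [lp.norm_single (by norm_num), norm_one] at this
    rwa [← one_div, le_div_iff₀ (abs_pos.2 hz), mul_comm]
  have hu0 := tendsto_apply_zero_of_add_smul_single _ z hu_norm hu
  rcases hx.eq_or_lt with rfl | hx
  · exact hu0
  refine tendsto_zero_of_norm_sq_le (g := fun t => |z.im|⁻¹ ^ 2 * ‖u t 0‖) (fun t => ?_)
    (by simpa only [norm_zero, mul_zero] using hu0.norm.const_mul (|z.im|⁻¹ ^ 2))
  have hright : ∀ k, 1 ≤ k → (H (u t) - z • u t) k = 0 := by
    intro k hk
    simpa only [lp.coeFn_sub, lp.coeFn_add, lp.coeFn_smul, Pi.sub_apply, Pi.add_apply,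
      Pi.smul_apply, lp.single_apply_ne _ _ _ (show k ≠ 0 by omega),
      lp.single_apply_ne _ _ _ (show k ≠ y by omega), smul_zero, add_zero]
      using congrArg (fun g : ℓ²ℤ => g k) (hu t)
  have hu1 : ‖u t 1‖ ≤ |z.im|⁻¹ := (lp.norm_apply_le_norm two_ne_zero _ 1).trans (hu_norm t)
  calc ‖u t x‖ ^ 2 = |z.im|⁻¹ * (|z.im| * ‖u t x‖ ^ 2) := by
        rw [← mul_assoc, inv_mul_cancel₀ (abs_ne_zero.2 hz), one_mul]
    _ ≤ |z.im|⁻¹ * (|z.im|⁻¹ * ‖u t 0‖) := by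
        refine mul_le_mul_of_nonneg_left ?_ (by positivity)
        exact (abs_im_mul_norm_apply_sq_le hH hright (show 1 ≤ x by omega)).trans (by gcongr)
    _ = |z.im|⁻¹ ^ 2 * ‖u t 0‖ := by ring

end DiscreteSchrodinger

open DiscreteSchrodinger in
theorem stmt_12_general
    (V : ℤ → ℝ)
    (δ : ℤ → lp (fun _ : ℤ => ℂ) 2) (hδ : ∀ x : ℤ, δ x = lp.single 2 x (1 : ℂ))
    (H : lp (fun _ : ℤ => ℂ) 2 →L[ℂ] lp (fun _ : ℤ => ℂ) 2)
    (hH : ∀ (u : lp (fun _ : ℤ => ℂ) 2) (x : ℤ),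
      (H u) x = -u (x + 1) - u (x - 1) + 2 * u x + (V x : ℂ) * u x)
    (P0 : lp (fun _ : ℤ => ℂ) 2 →L[ℂ] lp (fun _ : ℤ => ℂ) 2)
    (hP0 : ∀ u, P0 u = (inner ℂ (δ 0) u : ℂ) • δ 0)
    (Ht : ℝ → (lp (fun _ : ℤ => ℂ) 2 →L[ℂ] lp (fun _ : ℤ => ℂ) 2))
    (hHt : ∀ t : ℝ, Ht t = H + (t : ℂ) • P0)
    (z : ℂ) (hz : z.im ≠ 0)
    (Rt : ℝ → (lp (fun _ : ℤ => ℂ) 2 →L[ℂ] lp (fun _ : ℤ => ℂ) 2))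
    (hRt₁ : ∀ t : ℝ,
      (Ht t - z • (1 : lp (fun _ : ℤ => ℂ) 2 →L[ℂ] lp (fun _ : ℤ => ℂ) 2)) ∘L Rt t = 1)
    (Gt : ℝ → ℤ → ℤ → ℂ)
    (hGt : ∀ (t : ℝ) (x y : ℤ), Gt t x y = inner ℂ (δ x) (Rt t (δ y))) :
    ∀ x y : ℤ, 0 ≤ x → y ≤ 0 →
      Tendsto (fun t : ℝ => Gt t x y) atTop (nhds 0) := by
  intro x y hx hy
  have hδ_inner (k : ℤ) (w : ℓ²ℤ) : ⟪δ k, w⟫_ℂ = w k := by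
    rw [hδ]; exact inner_single_one_left k w
  have hHt_apply (t : ℝ) (w : ℓ²ℤ) : Ht t w = H w + ((t : ℂ) * w 0) • δ 0 := by
    rw [hHt, add_apply, smul_apply, hP0, hδ_inner, smul_smul]
  have hu (t : ℝ) : H (Rt t (δ y)) + ((t : ℂ) * Rt t (δ y) 0) • lp.single 2 0 1
      - z • Rt t (δ y) = lp.single 2 y 1 := by
    rw [← hδ, ← hδ, ← hHt_apply]
    simpa using congrArg (fun T => T (δ y)) (hRt₁ t)
  simpa only [hGt, hδ_inner] using tendsto_apply_atTop hH hz hy hu hx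

/-- Let `H` be the one-dimensional discrete Schrödinger operator on `ℓ²(ℤ)` with bounded
potential `V`, and for `t ∈ ℝ` let `H^t = H + t·Π₀` be obtained by replacing `V(0)` with
`V(0) + t` (`Π₀` is the projection onto the span of `δ₀`). Then for every `z ∈ ℂ` with
`Im z ≠ 0` and all integers `x ≥ 0`, `y ≤ 0`, one has `lim_{t → ∞} G^t(x,y;z) = 0`,
where `G^t(x,y;z) = ⟨δ_x, (H^t-z)⁻¹δ_y⟩`. -/
theorem stmt_12
    (V : ℤ → ℝ) (hV : ∃ C : ℝ, ∀ x : ℤ, |V x| ≤ C)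
    (δ : ℤ → lp (fun _ : ℤ => ℂ) 2) (hδ : ∀ x : ℤ, δ x = lp.single 2 x (1 : ℂ))
    (H : lp (fun _ : ℤ => ℂ) 2 →L[ℂ] lp (fun _ : ℤ => ℂ) 2)
    (hH : ∀ (u : lp (fun _ : ℤ => ℂ) 2) (x : ℤ),
      (H u) x = -u (x + 1) - u (x - 1) + 2 * u x + (V x : ℂ) * u x)
    (P0 : lp (fun _ : ℤ => ℂ) 2 →L[ℂ] lp (fun _ : ℤ => ℂ) 2)
    (hP0 : ∀ u, P0 u = (inner ℂ (δ 0) u : ℂ) • δ 0)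
    (Ht : ℝ → (lp (fun _ : ℤ => ℂ) 2 →L[ℂ] lp (fun _ : ℤ => ℂ) 2))
    (hHt : ∀ t : ℝ, Ht t = H + (t : ℂ) • P0)
    (z : ℂ) (hz : z.im ≠ 0)
    (Rt : ℝ → (lp (fun _ : ℤ => ℂ) 2 →L[ℂ] lp (fun _ : ℤ => ℂ) 2))
    (hRt₁ : ∀ t : ℝ,
      (Ht t - z • (1 : lp (fun _ : ℤ => ℂ) 2 →L[ℂ] lp (fun _ : ℤ => ℂ) 2)) ∘L Rt t = 1)
    (hRt₂ : ∀ t : ℝ,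
      Rt t ∘L (Ht t - z • (1 : lp (fun _ : ℤ => ℂ) 2 →L[ℂ] lp (fun _ : ℤ => ℂ) 2)) = 1)
    (Gt : ℝ → ℤ → ℤ → ℂ)
    (hGt : ∀ (t : ℝ) (x y : ℤ), Gt t x y = inner ℂ (δ x) (Rt t (δ y))) :
    ∀ x y : ℤ, 0 ≤ x → y ≤ 0 →
      Tendsto (fun t : ℝ => Gt t x y) atTop (nhds 0) :=
  stmt_12_general V δ hδ H hH P0 hP0 Ht hHt z hz Rt hRt₁ Gt hGt
end
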